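/- Let p be a prime and let K = ℚ_p ⊕ ℚ_p be the split quadratic ℚ_p-algebra, with 𝒪_m = {(a,b) ∈ ℤ_p ⊕ ℤ_p : a ≡ b mod p^m} the order of conductor p^m. Then for every m ≥ 0 and n ≥ 0, the ring homomorphism K → M₂(ℚ_p), (a,b) ↦ [[a, 0], [p^{n−m}(a−b), b]], defines an optimal embedding of 𝒪_m into the standard Eichler order R_n^{Eic} of level p^n in M₂(ℤ_p). In particular, 𝒪_m can be optimally embedded in R_n^{Eic} for every m ≥ 0, i.e. h(m,n) ≠ 0 for every m ≥ 0. -/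

import Mathlib

/-!
# Optimal embeddings of the split quadratic algebra into Eichler orders
(Lemma `LemmaC0` of Longo–Rotger–de Vera-Piquero)

Here `K = ℚ_p ⊕ ℚ_p` is the split quadratic `ℚ_p`-algebra.  Its order of conductor
`p^m` is `𝒪_m = {(a,b) ∈ ℤ_p ⊕ ℤ_p : a ≡ b mod p^m}`, encoded via the `p`-adic norm:
`(a,b) ∈ 𝒪_m ↔ ‖a‖ ≤ 1 ∧ ‖b‖ ≤ 1 ∧ ‖a - b‖ ≤ p^{-m}`.  The standard Eichler order of
level `p^n` in `M₂(ℚ_p)` is the set of integral matrices whose lower-left entry is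
divisible by `p^n`, again encoded via the norm.
-/

/-- The order `𝒪_m = {(a,b) ∈ ℤ_p ⊕ ℤ_p : a ≡ b mod p^m}` of conductor `p^m` in the
split quadratic algebra `K = ℚ_p ⊕ ℚ_p`. -/
def splitQuadOrder (p : ℕ) [Fact p.Prime] (m : ℕ) : Set (ℚ_[p] × ℚ_[p]) :=
  {x | ‖x.1‖ ≤ 1 ∧ ‖x.2‖ ≤ 1 ∧ ‖x.1 - x.2‖ ≤ (p : ℝ) ^ (-(m : ℤ))}

/-- The standard Eichler order `R_n^{Eic} = {[[a,b],[c,d]] ∈ M₂(ℤ_p) : p^n ∣ c}` of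
level `p^n` in `M₂(ℚ_p)`. -/
def stdEichlerOrder (p : ℕ) [Fact p.Prime] (n : ℕ) :
    Set (Matrix (Fin 2) (Fin 2) ℚ_[p]) :=
  {A | (∀ i j, ‖A i j‖ ≤ 1) ∧ ‖A 1 0‖ ≤ (p : ℝ) ^ (-(n : ℤ))}

/-!
The map is the ring homomorphism `(a, b) ↦ !![a, 0; c (a - b), b]` with `c = p^{n-m}`, which is
multiplicative for every `c` because `c (a - b) a' + b c (a' - b') = c (a a' - b b')`.  The
diagonal entries of the image are integral iff `a, b ∈ ℤ_p`, and since `‖c‖ = p^{m-n}` the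
lower-left entry lies in `p^n ℤ_p` iff `a - b ∈ p^m ℤ_p`, which is exactly membership in `𝒪_m`.
-/

namespace Matrix

variable {R : Type*} [CommRing R]

def splitLowerTriangular (c : R) : R × R →+* Matrix (Fin 2) (Fin 2) R where
  toFun x := !![x.1, 0; c * (x.1 - x.2), x.2]
  map_one' := by simp [one_fin_two]
  map_mul' x y := by
    have h : c * (x.1 * y.1 - x.2 * y.2) = c * (x.1 - x.2) * y.1 + x.2 * (c * (y.1 - y.2)) := by
      ring
    simp [h]
  map_zero' := by
    ext i j
    fin_cases i <;> fin_cases j <;> simp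
  map_add' x y := by
    ext i j
    fin_cases i <;> fin_cases j <;> simp
    ring

theorem splitLowerTriangular_apply (c : R) (x : R × R) :
    splitLowerTriangular c x = !![x.1, 0; c * (x.1 - x.2), x.2] :=
  rfl

end Matrix

namespace Padic

variable {p : ℕ} [Fact p.Prime]

theorem norm_p_zpow_mul_le_zpow_iff (k l : ℤ) (x : ℚ_[p]) :
    ‖(p : ℚ_[p]) ^ k * x‖ ≤ (p : ℝ) ^ l ↔ ‖x‖ ≤ (p : ℝ) ^ (k + l) := by
  have hp : (0 : ℝ) < p := by exact_mod_cast (Fact.out : p.Prime).pos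
  rw [norm_mul, norm_p_zpow, zpow_add₀ hp.ne', ← le_inv_mul_iff₀ (zpow_pos hp _),
    ← zpow_neg, neg_neg]

end Padic

theorem lowerTriangular_mem_stdEichlerOrder_iff {p : ℕ} [Fact p.Prime] {n : ℕ} (a c d : ℚ_[p]) :
    !![a, 0; c, d] ∈ stdEichlerOrder p n ↔
      ‖a‖ ≤ 1 ∧ ‖d‖ ≤ 1 ∧ ‖c‖ ≤ (p : ℝ) ^ (-(n : ℤ)) := by
  have hp : (1 : ℝ) ≤ p := by exact_mod_cast (Fact.out : p.Prime).one_lt.le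
  have hpn : (p : ℝ) ^ (-(n : ℤ)) ≤ 1 := zpow_le_one_of_nonpos₀ hp (by omega)
  constructor
  · rintro ⟨hint, hc⟩
    exact ⟨by simpa using hint 0 0, by simpa using hint 1 1, by simpa using hc⟩
  · rintro ⟨ha, hd, hc⟩
    refine ⟨fun i j => ?_, by simpa using hc⟩
    fin_cases i <;> fin_cases j <;> simp [ha, hd, hc.trans hpn]

/-- **Lemma.** For every `m ≥ 0` and `n ≥ 0`, the ring homomorphism
`K → M₂(ℚ_p)`, `(a,b) ↦ [[a, 0], [p^{n-m}(a-b), b]]`, defines an optimal embedding of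
`𝒪_m` into the standard Eichler order `R_n^{Eic}` of level `p^n`: it is a (unital)
ring homomorphism and `φ(x) ∈ R_n^{Eic} ↔ x ∈ 𝒪_m`.  In particular `𝒪_m` can be
optimally embedded in `R_n^{Eic}` for every `m ≥ 0`, i.e. `h(m,n) ≠ 0`. -/
theorem splitQuadOrder_optimal_embedding (p : ℕ) [Fact p.Prime] (m n : ℕ)
    (φ : ℚ_[p] × ℚ_[p] → Matrix (Fin 2) (Fin 2) ℚ_[p])
    (hφ : ∀ x : ℚ_[p] × ℚ_[p],
      φ x = !![x.1, 0; (p : ℚ_[p]) ^ ((n : ℤ) - (m : ℤ)) * (x.1 - x.2), x.2]) :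
    (∀ x y, φ (x * y) = φ x * φ y) ∧
    (∀ x y, φ (x + y) = φ x + φ y) ∧
    φ 1 = 1 ∧
    (∀ x, φ x ∈ stdEichlerOrder p n ↔ x ∈ splitQuadOrder p m) ∧
    ∃ f : (ℚ_[p] × ℚ_[p]) →+* Matrix (Fin 2) (Fin 2) ℚ_[p],
      ∀ x, f x ∈ stdEichlerOrder p n ↔ x ∈ splitQuadOrder p m := by
  set f := Matrix.splitLowerTriangular ((p : ℚ_[p]) ^ ((n : ℤ) - (m : ℤ)))
  obtain rfl : φ = f := funext hφ
  have hmem : ∀ x, f x ∈ stdEichlerOrder p n ↔ x ∈ splitQuadOrder p m := by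
    intro x
    rw [Matrix.splitLowerTriangular_apply, lowerTriangular_mem_stdEichlerOrder_iff,
      Padic.norm_p_zpow_mul_le_zpow_iff, show (n : ℤ) - m + -n = -m by ring]
    rfl
  exact ⟨map_mul f, map_add f, map_one f, hmem, f, hmem⟩
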